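/- Let 1<p,q<∞ with 1/p+1/q=1, let μ be a finite Borel measure on ℝ^d, let {λ_n} be a sequence of Borel probability measures with sup{|t| : t ∈ supp λ_n} → 0 as n → ∞ (an approximate identity), and let ν be a σ-finite Borel measure such that every ν ∗ λ_n is a (p,q)-Bessel measure for μ with a uniform bound B. Then ν is a (p,q)-Bessel measure for μ with bound B. -/

import Mathlib

/-!
Since `μ` is finite, `f ∈ L^p(μ)` is integrable, so `G = |(f dμ)^|^q` is continuous. As the
`λ_n` are probability measures concentrating at `0`, lower semicontinuity of `G` gives
`G x ≤ liminf ∫ G (x + t) dλ_n(t)` pointwise; integrating in `x` against `ν` and applying Fatou's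
lemma yields `∫ G dν ≤ liminf ∫ G d(ν ∗ λ_n) ≤ B ‖f‖_p^q`.
-/

open MeasureTheory Complex Filter
open scoped ENNReal NNReal Real RealInnerProductSpace

/-- The Fourier transform of the measure `f dμ` at `t`:
`(f dμ)^(t) = ∫ f(x) e^{-2πi t·x} dμ(x)`. -/
noncomputable def FT {d : ℕ} (μ : Measure (EuclideanSpace ℝ (Fin d)))
    (f : EuclideanSpace ℝ (Fin d) → ℂ) (t : EuclideanSpace ℝ (Fin d)) : ℂ :=
  ∫ x, f x * Complex.exp (-(2 * Real.pi * (⟪t, x⟫ : ℝ) : ℝ) * Complex.I) ∂μ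
variable {d : ℕ}

/-- Convolution of two Borel measures on `ℝ^d`. -/
noncomputable def convM (ν ρ : Measure (EuclideanSpace ℝ (Fin d))) :
    Measure (EuclideanSpace ℝ (Fin d)) :=
  Measure.map (fun z : EuclideanSpace ℝ (Fin d) × EuclideanSpace ℝ (Fin d) => z.1 + z.2)
    (ν.prod ρ)

open FourierTransform

theorem FT_eq_fourierIntegral (μ : Measure (EuclideanSpace ℝ (Fin d)))
    (f : EuclideanSpace ℝ (Fin d) → ℂ) :
    FT μ f = VectorFourier.fourierIntegral 𝐞 μ (innerₗ _) f := by
  ext t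
  rw [Real.vector_fourierIntegral_eq_integral_exp_smul]
  refine integral_congr_ae (ae_of_all _ fun x => ?_)
  simp only [smul_eq_mul, innerₗ_apply_apply, real_inner_comm t x]
  push_cast
  ring_nf

theorem continuous_FT {μ : Measure (EuclideanSpace ℝ (Fin d))}
    {f : EuclideanSpace ℝ (Fin d) → ℂ} (hf : Integrable f μ) : Continuous (FT μ f) := by
  rw [FT_eq_fourierIntegral]
  exact VectorFourier.fourierIntegral_continuous Real.continuous_fourierChar
    continuous_inner hf

section ApproximateIdentity

variable {E : Type*} [SeminormedAddCommGroup E] [MeasurableSpace E] {G : E → ℝ≥0∞}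

theorem LowerSemicontinuous.le_liminf_lintegral_comp_add {ι : Type*} {l : Filter ι}
    {Λ : ι → Measure E} [∀ i, IsProbabilityMeasure (Λ i)] (hG : LowerSemicontinuous G)
    (hΛ : ∀ ε > 0, ∀ᶠ i in l, Λ i {t | ε < ‖t‖} = 0) (x : E) :
    G x ≤ liminf (fun i => ∫⁻ t, G (x + t) ∂Λ i) l := by
  refine le_of_forall_lt_imp_le_of_dense fun c hc => ?_
  obtain ⟨δ, hδ, hball⟩ := Metric.eventually_nhds_iff_ball.1 (hG x c hc)
  refine le_liminf_of_le (by isBoundedDefault) ?_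
  filter_upwards [hΛ (δ / 2) (half_pos hδ)] with i hi
  have hae : ∀ᵐ t ∂Λ i, c ≤ G (x + t) := by
    refine measure_mono_null (fun t ht => ?_) hi
    by_contra hsmall
    refine ht (hball (x + t) ?_).le
    rw [Metric.mem_ball, dist_eq_norm, add_sub_cancel_left]
    exact (not_lt.1 hsmall).trans_lt (half_lt_self hδ)
  calc c = ∫⁻ _, c ∂Λ i := by simp
    _ ≤ ∫⁻ t, G (x + t) ∂Λ i := lintegral_mono_ae hae

theorem LowerSemicontinuous.lintegral_le_liminf_lintegral_conv [OpensMeasurableSpace E]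
    [MeasurableAdd₂ E] {ν : Measure E} {Λ : ℕ → Measure E} [∀ n, IsProbabilityMeasure (Λ n)]
    (hG : LowerSemicontinuous G) (hΛ : ∀ ε > 0, ∀ᶠ n in atTop, Λ n {t | ε < ‖t‖} = 0) :
    ∫⁻ t, G t ∂ν ≤ liminf (fun n => ∫⁻ t, G t ∂(ν ∗ Λ n)) atTop := by
  have hGm : Measurable G := hG.measurable
  calc ∫⁻ t, G t ∂ν ≤ ∫⁻ x, liminf (fun n => ∫⁻ t, G (x + t) ∂Λ n) atTop ∂ν :=
        lintegral_mono (hG.le_liminf_lintegral_comp_add hΛ)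
    _ ≤ liminf (fun n => ∫⁻ x, ∫⁻ t, G (x + t) ∂Λ n ∂ν) atTop :=
        lintegral_liminf_le fun n => (hGm.comp measurable_add).lintegral_prod_right'
    _ = liminf (fun n => ∫⁻ t, G t ∂(ν ∗ Λ n)) atTop := by
        simp_rw [Measure.lintegral_conv hGm]

end ApproximateIdentity

theorem stmt18_general (p q : ℝ) (hp : 1 < p)
    (μ ν : Measure (EuclideanSpace ℝ (Fin d))) [IsFiniteMeasure μ]
    (Λ : ℕ → Measure (EuclideanSpace ℝ (Fin d))) (hprob : ∀ n, IsProbabilityMeasure (Λ n))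
    (happrox : ∀ ε : ℝ, 0 < ε → ∃ N : ℕ, ∀ n ≥ N,
      (Λ n) {t : EuclideanSpace ℝ (Fin d) | ε < ‖t‖} = 0)
    (B : ℝ)
    (hBessel : ∀ n, ∀ f : EuclideanSpace ℝ (Fin d) → ℂ, MemLp f (ENNReal.ofReal p) μ →
      ∫⁻ t, (‖FT μ f t‖₊ : ℝ≥0∞) ^ q ∂(convM ν (Λ n)) ≤
        ENNReal.ofReal B * (eLpNorm f (ENNReal.ofReal p) μ) ^ q) :
    ∀ f : EuclideanSpace ℝ (Fin d) → ℂ, MemLp f (ENNReal.ofReal p) μ →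
      ∫⁻ t, (‖FT μ f t‖₊ : ℝ≥0∞) ^ q ∂ν ≤
        ENNReal.ofReal B * (eLpNorm f (ENNReal.ofReal p) μ) ^ q := by
  intro f hf
  have := hprob
  have hFT : Continuous (FT μ f) :=
    continuous_FT (hf.integrable (ENNReal.one_le_ofReal.2 hp.le))
  have hG : Continuous fun t => (‖FT μ f t‖₊ : ℝ≥0∞) ^ q :=
    ENNReal.continuous_rpow_const.comp (ENNReal.continuous_coe.comp hFT.nnnorm)
  calc ∫⁻ t, (‖FT μ f t‖₊ : ℝ≥0∞) ^ q ∂ν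
      ≤ liminf (fun n => ∫⁻ t, (‖FT μ f t‖₊ : ℝ≥0∞) ^ q ∂(convM ν (Λ n))) atTop :=
        hG.lowerSemicontinuous.lintegral_le_liminf_lintegral_conv
          fun ε hε => eventually_atTop.2 (happrox ε hε)
    _ ≤ ENNReal.ofReal B * (eLpNorm f (ENNReal.ofReal p) μ) ^ q :=
        liminf_le_of_frequently_le' (Frequently.of_forall fun n => hBessel n f hf)

/-- If `{Λ n}` is an approximate identity (probability measures whose supports shrink to
`{0}`), `ν` is σ-finite, and every `ν ∗ Λ n` is a `(p,q)`-Bessel measure for the finite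
measure `μ` with the uniform bound `B`, then `ν` itself is a `(p,q)`-Bessel measure for
`μ` with bound `B`. -/
theorem stmt18 (p q : ℝ) (hp : 1 < p) (hq : 1 < q) (hpq : 1 / p + 1 / q = 1)
    (μ ν : Measure (EuclideanSpace ℝ (Fin d))) [IsFiniteMeasure μ] [SigmaFinite ν]
    (Λ : ℕ → Measure (EuclideanSpace ℝ (Fin d))) (hprob : ∀ n, IsProbabilityMeasure (Λ n))
    (happrox : ∀ ε : ℝ, 0 < ε → ∃ N : ℕ, ∀ n ≥ N,
      (Λ n) {t : EuclideanSpace ℝ (Fin d) | ε < ‖t‖} = 0)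
    (B : ℝ) (hB : 0 < B)
    (hBessel : ∀ n, ∀ f : EuclideanSpace ℝ (Fin d) → ℂ, MemLp f (ENNReal.ofReal p) μ →
      ∫⁻ t, (‖FT μ f t‖₊ : ℝ≥0∞) ^ q ∂(convM ν (Λ n)) ≤
        ENNReal.ofReal B * (eLpNorm f (ENNReal.ofReal p) μ) ^ q) :
    ∀ f : EuclideanSpace ℝ (Fin d) → ℂ, MemLp f (ENNReal.ofReal p) μ →
      ∫⁻ t, (‖FT μ f t‖₊ : ℝ≥0∞) ^ q ∂ν ≤
        ENNReal.ofReal B * (eLpNorm f (ENNReal.ofReal p) μ) ^ q :=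
  stmt18_general p q hp μ ν Λ hprob happrox B hBessel
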